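/- In a directed graph, let X and Y be vertex sets such that every vertex outside X ∪ Y has in-degree and out-degree both equal to 1 or both equal to 0, every vertex in X \ Y has in-degree 0 and out-degree 1, every vertex in Y \ X has out-degree 0 and in-degree 1, and vertices in X ∩ Y have in-degree and out-degree 0. Then every weakly connected component meeting X is either a finite directed path from X ending in Y, or a directed ray starting in X. -/

import Mathlib

open Set


/-- A finite directed path/walk or a ray, encoded by a vertex function and a length:
the number of edges, `⊤` for a ray. Only indices `≤ len` are meaningful. -/
structure DiWalk (V : Type*) where
  vtx : ℕ → V
  len : ℕ∞

namespace DiWalk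

variable {V : Type*} (w : DiWalk V)

/-- The vertices of the walk. -/
def support : Set V := {v | ∃ i : ℕ, (i : ℕ∞) ≤ w.len ∧ w.vtx i = v}

/-- The directed edges of the walk. -/
def edges : Set (V × V) := {e | ∃ i : ℕ, (i : ℕ∞) + 1 ≤ w.len ∧ e = (w.vtx i, w.vtx (i + 1))}

/-- The initial vertex. -/
def Ini : V := w.vtx 0

/-- The terminal vertex (meaningful for finite walks). -/
def Ter : V := w.vtx w.len.toNat

/-- `w` is a ray, i.e. one-way infinite. -/
def IsRay : Prop := w.len = ⊤

/-- `w` is a (finite) directed path or a directed ray in the digraph `D`: consecutive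
vertices are joined by edges of `D` and no vertex is repeated. -/
def IsPathIn (D : V → V → Prop) : Prop :=
  (∀ i : ℕ, (i : ℕ∞) + 1 ≤ w.len → D (w.vtx i) (w.vtx (i + 1))) ∧
  (∀ i j : ℕ, (i : ℕ∞) ≤ w.len → (j : ℕ∞) ≤ w.len → w.vtx i = w.vtx j → i = j)

end DiWalk

variable {V : Type*}

/-- The vertex set of a family of walks. -/
def VSet (Q : Set (DiWalk V)) : Set V := ⋃ q ∈ Q, q.support

/-- The edge set of a family of walks. -/
def ESet (Q : Set (DiWalk V)) : Set (V × V) := ⋃ q ∈ Q, q.edges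

/-- The set of initial vertices of a family of walks. -/
def IniSet (Q : Set (DiWalk V)) : Set V := DiWalk.Ini '' Q

/-- The set of terminal vertices of the finite members of a family of walks. -/
def TerSet (Q : Set (DiWalk V)) : Set V := {v | ∃ q ∈ Q, ¬ q.IsRay ∧ q.Ter = v}

/-- The members of `Q` are pairwise vertex-disjoint. -/
def PairwiseDisjointWalks (Q : Set (DiWalk V)) : Prop :=
  ∀ p ∈ Q, ∀ q ∈ Q, p ≠ q → Disjoint p.support q.support

/-- `Q` is a set of pairwise disjoint directed paths or rays in `D`. -/
def IsPathSystem (D : V → V → Prop) (Q : Set (DiWalk V)) : Prop :=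
  (∀ q ∈ Q, q.IsPathIn D) ∧ PairwiseDisjointWalks Q

/-- A linkage in the dimaze `(D, B0)`: a set of pairwise disjoint finite directed paths
ending in `B0`. -/
def IsLinkage (D : V → V → Prop) (B0 : Set V) (Q : Set (DiWalk V)) : Prop :=
  IsPathSystem D Q ∧ ∀ q ∈ Q, ¬ q.IsRay ∧ q.Ter ∈ B0

/-- `I` is linkable to `B0` in `(D, B0)`. -/
def Linkable (D : V → V → Prop) (B0 : Set V) (I : Set V) : Prop :=
  ∃ Q, IsLinkage D B0 Q ∧ IniSet Q = I

/-- `I` is linkable onto `B0`: some linkage from `I` has terminal vertex set exactly `B0`. -/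
def LinkableOnto (D : V → V → Prop) (B0 : Set V) (I : Set V) : Prop :=
  ∃ Q, IsLinkage D B0 Q ∧ IniSet Q = I ∧ TerSet Q = B0

/-- `B0` is a set of sinks of `D`. -/
def IsDimaze (D : V → V → Prop) (B0 : Set V) : Prop := ∀ b ∈ B0, ∀ v, ¬ D b v

/-- `v` is the centre of a linking fan: infinitely many non-trivial directed paths to `B0`
from `v`, pairwise meeting only in `v`. -/
def IsFanCentre (D : V → V → Prop) (B0 : Set V) (v : V) : Prop :=
  ∃ P : Set (DiWalk V), P.Infinite ∧
    (∀ p ∈ P, p.IsPathIn D ∧ ¬ p.IsRay ∧ 1 ≤ p.len ∧ p.Ini = v ∧ p.Ter ∈ B0) ∧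
    (∀ p ∈ P, ∀ q ∈ P, p ≠ q → p.support ∩ q.support ⊆ {v})

/-- The ray `R` is the spine of an outgoing comb with teeth ending in `B0`: there are
infinitely many pairwise disjoint non-trivial paths from distinct vertices of `R` to `B0`,
each meeting `R` exactly in its initial vertex. -/
def IsSpine (D : V → V → Prop) (B0 : Set V) (R : DiWalk V) : Prop :=
  R.IsPathIn D ∧ R.IsRay ∧
  ∃ P : Set (DiWalk V), P.Infinite ∧
    (∀ p ∈ P, p.IsPathIn D ∧ ¬ p.IsRay ∧ 1 ≤ p.len ∧ p.Ini ∈ R.support ∧ p.Ter ∈ B0 ∧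
      p.support ∩ R.support = {p.Ini}) ∧
    PairwiseDisjointWalks P

/-- `(D, B0)` contains no subdivision of an outgoing comb. -/
def COFree (D : V → V → Prop) (B0 : Set V) : Prop := ¬ ∃ R, IsSpine D B0 R

/-- `(D, B0)` contains no subdivision of a linking fan. -/
def FanFree (D : V → V → Prop) (B0 : Set V) : Prop := ¬ ∃ v, IsFanCentre D B0 v

/-- A topological path in `(D, B0)`. -/
def IsTopPath (D : V → V → Prop) (B0 : Set V) (w : DiWalk V) : Prop :=
  w.IsPathIn D ∧
    ((¬ w.IsRay ∧ w.Ter ∈ B0) ∨ (¬ w.IsRay ∧ IsFanCentre D B0 w.Ter) ∨ IsSpine D B0 w)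

/-- `I` is topologically linkable in `(D, B0)`. -/
def TopLinkable (D : V → V → Prop) (B0 : Set V) (I : Set V) : Prop :=
  ∃ Q : Set (DiWalk V), (∀ q ∈ Q, IsTopPath D B0 q) ∧ PairwiseDisjointWalks Q ∧ IniSet Q = I

/-!
Under the degree conditions every vertex has in- and out-degree at most one, and the vertices
of `X` are sources. Hence repeatedly following the unique out-edge from `v ∈ X` never revisits
a vertex, and every neighbour of a vertex on the resulting walk is its predecessor or successor
on it, so the walk exhausts the weak component of `v`. If the walk stops, it stops at a sink
that is `v` itself or has an in-edge, and the degree conditions put such a vertex in `Y`.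
-/

open Relation

theorem ENat.add_one_le_iInf_not_iff {P : ℕ → Prop} (hP : Antitone P) (i : ℕ) :
    (i : ℕ∞) + 1 ≤ ⨅ (n : ℕ) (_ : ¬P n), (n : ℕ∞) ↔ P i := by
  simp only [le_iInf_iff]
  constructor
  · intro h
    by_contra hi
    have := h i hi
    norm_cast at this
    omega
  · intro hi n hn
    have : i < n := lt_of_not_ge fun hni => hn (hP hni hi)
    exact_mod_cast this

theorem ENat.eq_of_le_of_not_add_one_le {i : ℕ} {n : ℕ∞} (hi : (i : ℕ∞) ≤ n)
    (hi' : ¬(i : ℕ∞) + 1 ≤ n) : n = i := by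
  rw [ENat.add_one_le_iff (ENat.natCast_ne_top i), not_lt] at hi'
  exact le_antisymm hi' hi

namespace DiWalk

variable {D : V → V → Prop} {w : DiWalk V}

def IsWalkIn (D : V → V → Prop) (w : DiWalk V) : Prop :=
  ∀ i : ℕ, (i : ℕ∞) + 1 ≤ w.len → D (w.vtx i) (w.vtx (i + 1))

theorem IsWalkIn.ter_eq_ini_or_exists_pred (hw : w.IsWalkIn D) :
    w.Ter = w.Ini ∨ ∃ a, D a w.Ter := by
  rcases h : w.len.toNat with _ | k
  · left
    rw [Ter, h, Ini]
  · right
    refine ⟨w.vtx k, ?_⟩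
    rw [Ter, h]
    refine hw k ?_
    exact_mod_cast h ▸ ENat.natCast_toNat_le_self w.len

theorem IsWalkIn.isPathIn (hw : w.IsWalkIn D) (hL : Relator.LeftUnique D)
    (hsrc : ¬∃ u, D u w.Ini) : w.IsPathIn D := by
  have key : ∀ i j : ℕ, i ≤ j → (j : ℕ∞) ≤ w.len → w.vtx i = w.vtx j → i = j := by
    intro i
    induction i with
    | zero =>
      rintro (_ | k) - hk he
      · rfl
      · refine absurd ⟨w.vtx k, ?_⟩ hsrc
        rw [Ini, he]
        exact hw k (by exact_mod_cast hk)
    | succ m ih =>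
      rintro (_ | k) hmk hk he
      · omega
      have hk' : (k : ℕ∞) + 1 ≤ w.len := by exact_mod_cast hk
      have hm' : (m : ℕ∞) + 1 ≤ w.len := le_trans (by exact_mod_cast hmk) hk'
      have := ih k (by omega) (le_trans le_self_add hk') (hL (he ▸ hw m hm') (hw k hk'))
      omega
  refine ⟨hw, fun i j hi hj he => ?_⟩
  rcases le_total i j with h | h
  · exact key i j h hj he
  · exact (key j i h hi he.symm).symm

theorem IsWalkIn.reflTransGen_of_mem_support (hw : w.IsWalkIn D) {u : V} (hu : u ∈ w.support) :
    ReflTransGen (fun a b => D a b ∨ D b a) w.Ini u := by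
  obtain ⟨i, hi, rfl⟩ := hu
  induction i with
  | zero => rfl
  | succ k ih =>
    have hk : (k : ℕ∞) + 1 ≤ w.len := by exact_mod_cast hi
    exact (ih (le_trans le_self_add hk)).tail (Or.inl (hw k hk))

theorem IsWalkIn.support_eq (hw : w.IsWalkIn D) (hR : Relator.RightUnique D)
    (hL : Relator.LeftUnique D) (hsrc : ¬∃ u, D u w.Ini)
    (hend : w.IsRay ∨ ¬∃ u, D w.Ter u) :
    w.support = {u | ReflTransGen (fun a b => D a b ∨ D b a) w.Ini u} := by
  refine Subset.antisymm (fun u hu => hw.reflTransGen_of_mem_support hu) fun u hu => ?_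
  induction hu with
  | refl => exact ⟨0, zero_le, rfl⟩
  | tail _ hbc ih =>
    obtain ⟨i, hi, rfl⟩ := ih
    rcases hbc with hsucc | hpred
    · have hi' : (i : ℕ∞) + 1 ≤ w.len := by
        by_contra hi'
        have hlen := ENat.eq_of_le_of_not_add_one_le hi hi'
        rcases hend with hray | hsink
        · exact ENat.natCast_ne_top i (hlen.symm.trans hray)
        · exact hsink ⟨_, by rwa [Ter, hlen, ENat.toNat_natCast]⟩
      exact ⟨i + 1, by exact_mod_cast hi', hR (hw i hi') hsucc⟩
    · rcases i with _ | k
      · exact absurd ⟨_, hpred⟩ hsrc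
      have hk : (k : ℕ∞) + 1 ≤ w.len := by exact_mod_cast hi
      exact ⟨k, le_trans le_self_add hk, hL (hw k hk) hpred⟩

open Classical in
noncomputable def succOrSelf (D : V → V → Prop) (u : V) : V :=
  if h : ∃ w, D u w then h.choose else u

/-- The walk that follows out-edges from `v` for as long as there are any; its length is the
first time it reaches a sink, and `⊤` (the infimum of the empty set) if it never does. -/
noncomputable def forward (D : V → V → Prop) (v : V) : DiWalk V where
  vtx n := (succOrSelf D)^[n] v
  len := ⨅ (n : ℕ) (_ : ¬∃ u, D ((succOrSelf D)^[n] v) u), (n : ℕ∞)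

theorem forward_vtx_succ (v : V) (n : ℕ) :
    (forward D v).vtx (n + 1) = succOrSelf D ((forward D v).vtx n) :=
  Function.iterate_succ_apply' ..

theorem add_one_le_forward_len_iff (v : V) (i : ℕ) :
    (i : ℕ∞) + 1 ≤ (forward D v).len ↔ ∃ u, D ((forward D v).vtx i) u := by
  refine ENat.add_one_le_iInf_not_iff (antitone_nat_of_succ_le fun n hn => ?_) i
  by_contra hsink
  rw [Function.iterate_succ_apply', succOrSelf, dif_neg hsink] at hn
  exact hsink hn

theorem forward_isWalkIn (v : V) : (forward D v).IsWalkIn D := fun i hi => by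
  have hsucc := (add_one_le_forward_len_iff v i).1 hi
  rw [forward_vtx_succ, succOrSelf, dif_pos hsucc]
  exact hsucc.choose_spec

theorem forward_isRay_or_ter_sink (v : V) :
    (forward D v).IsRay ∨ ¬∃ u, D (forward D v).Ter u := by
  refine or_iff_not_imp_left.2 fun hfin => ?_
  rw [Ter, ← add_one_le_forward_len_iff, ENat.natCast_toNat hfin]
  exact (ENat.lt_add_one_iff hfin).2 le_rfl |>.not_ge

end DiWalk

section DegreeConditions

variable {D : V → V → Prop} {X Y : Set V}

theorem rightUnique_of_degrees
    (h0 : ∀ v, v ∉ X ∪ Y →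
      ((∃! u, D u v) ∧ (∃! u, D v u)) ∨ ((¬ ∃ u, D u v) ∧ (¬ ∃ u, D v u)))
    (hX : ∀ v ∈ X \ Y, (¬ ∃ u, D u v) ∧ (∃! u, D v u))
    (hY : ∀ v ∈ Y \ X, (∃! u, D u v) ∧ (¬ ∃ u, D v u))
    (hXY : ∀ v ∈ X ∩ Y, (¬ ∃ u, D u v) ∧ (¬ ∃ u, D v u)) :
    Relator.RightUnique D := by
  intro v a b ha hb
  have hout : (∃! u, D v u) ∨ ¬∃ u, D v u := by
    by_cases hx : v ∈ X <;> by_cases hy : v ∈ Y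
    · exact .inr (hXY v ⟨hx, hy⟩).2
    · exact .inl (hX v ⟨hx, hy⟩).2
    · exact .inr (hY v ⟨hy, hx⟩).2
    · exact (h0 v (by simp [hx, hy])).imp (·.2) (·.2)
  exact hout.elim (·.unique ha hb) fun h => absurd ⟨a, ha⟩ h

theorem leftUnique_of_degrees
    (h0 : ∀ v, v ∉ X ∪ Y →
      ((∃! u, D u v) ∧ (∃! u, D v u)) ∨ ((¬ ∃ u, D u v) ∧ (¬ ∃ u, D v u)))
    (hX : ∀ v ∈ X \ Y, (¬ ∃ u, D u v) ∧ (∃! u, D v u))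
    (hY : ∀ v ∈ Y \ X, (∃! u, D u v) ∧ (¬ ∃ u, D v u))
    (hXY : ∀ v ∈ X ∩ Y, (¬ ∃ u, D u v) ∧ (¬ ∃ u, D v u)) :
    Relator.LeftUnique D := by
  intro a b v ha hb
  have hin : (∃! u, D u v) ∨ ¬∃ u, D u v := by
    by_cases hx : v ∈ X <;> by_cases hy : v ∈ Y
    · exact .inr (hXY v ⟨hx, hy⟩).1
    · exact .inr (hX v ⟨hx, hy⟩).1
    · exact .inl (hY v ⟨hy, hx⟩).1
    · exact (h0 v (by simp [hx, hy])).imp (·.1) (·.1)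
  exact hin.elim (·.unique ha hb) fun h => absurd ⟨a, ha⟩ h

theorem not_exists_pred_of_mem
    (hX : ∀ v ∈ X \ Y, (¬ ∃ u, D u v) ∧ (∃! u, D v u))
    (hXY : ∀ v ∈ X ∩ Y, (¬ ∃ u, D u v) ∧ (¬ ∃ u, D v u)) {v : V} (hv : v ∈ X) :
    ¬∃ u, D u v := by
  by_cases hy : v ∈ Y
  · exact (hXY v ⟨hv, hy⟩).1
  · exact (hX v ⟨hv, hy⟩).1

theorem mem_of_sink
    (h0 : ∀ v, v ∉ X ∪ Y →
      ((∃! u, D u v) ∧ (∃! u, D v u)) ∨ ((¬ ∃ u, D u v) ∧ (¬ ∃ u, D v u)))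
    (hX : ∀ v ∈ X \ Y, (¬ ∃ u, D u v) ∧ (∃! u, D v u)) {v : V}
    (hv : v ∈ X ∨ ∃ a, D a v) (hsink : ¬∃ u, D v u) : v ∈ Y := by
  by_contra hy
  by_cases hx : v ∈ X
  · exact hsink (hX v ⟨hx, hy⟩).2.exists
  · rcases h0 v (by simp [hx, hy]) with ⟨-, hout⟩ | ⟨hno, -⟩
    · exact hsink hout.exists
    · exact hno (hv.resolve_left hx)

end DegreeConditions

theorem components_are_paths_or_rays {V : Type*} (D : V → V → Prop) (X Y : Set V)
    (h0 : ∀ v, v ∉ X ∪ Y →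
      ((∃! u, D u v) ∧ (∃! u, D v u)) ∨ ((¬ ∃ u, D u v) ∧ (¬ ∃ u, D v u)))
    (hX : ∀ v ∈ X \ Y, (¬ ∃ u, D u v) ∧ (∃! u, D v u))
    (hY : ∀ v ∈ Y \ X, (∃! u, D u v) ∧ (¬ ∃ u, D v u))
    (hXY : ∀ v ∈ X ∩ Y, (¬ ∃ u, D u v) ∧ (¬ ∃ u, D v u)) :
    ∀ v ∈ X, ∃ w : DiWalk V, w.IsPathIn D ∧ w.Ini ∈ X ∧
      w.support = {u | Relation.ReflTransGen (fun a b => D a b ∨ D b a) v u} ∧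
      (w.IsRay ∨ w.Ter ∈ Y) := by
  intro v hv
  have hR := rightUnique_of_degrees h0 hX hY hXY
  have hL := leftUnique_of_degrees h0 hX hY hXY
  have hsrc := not_exists_pred_of_mem hX hXY hv
  have hw := DiWalk.forward_isWalkIn (D := D) v
  have hend := DiWalk.forward_isRay_or_ter_sink (D := D) v
  refine ⟨DiWalk.forward D v, hw.isPathIn hL hsrc, hv, hw.support_eq hR hL hsrc hend, ?_⟩
  refine hend.imp_right fun hsink => mem_of_sink h0 hX ?_ hsink
  rcases hw.ter_eq_ini_or_exists_pred with hini | hpred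
  · exact .inl (hini ▸ hv)
  · exact .inr hpred
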